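/- With m̃ₙ the regularized signed maximum (cut-off χ satisfying 0 ≤ χ' ≤ 1+δ, |χ| ≤ 1, χ odd, χ = ±1 outside [−1,1], χ(s) ≤ s on [−1,0], χ(s) ≥ s on [0,1]), the directional derivative of m̃ₙ along (1,…,1) satisfies 1 ≤ Σⱼ₌₁ⁿ ∂ⱼ m̃ₙ(z) ≤ 2 + δ at every point z where max z and min z are attained at unique indices. -/

import Mathlib

/-- The regularized signed maximum of coordinates:
`m̃ₙ(z) = ½(max z + min z) + ½(max z − min z)·χ((max z + min z)/(1 + max z − min z))`. -/
noncomputable def mtilde (χ : ℝ → ℝ) : (n : ℕ) → (Fin n → ℝ) → ℝ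
  | 0, _ => 0
  | _ + 1, z =>
    let M := Finset.univ.sup' Finset.univ_nonempty z
    let L := Finset.univ.inf' Finset.univ_nonempty z
    (M + L) / 2 + (M - L) / 2 * χ ((M + L) / (1 + (M - L)))

/-- At points where max and min are attained at unique indices, the directional
derivative of `m̃ₙ` along `(1,…,1)` (i.e. `Σⱼ∂ⱼm̃ₙ`) lies in `[1, 2 + δ]`. -/
theorem mtilde_directional_deriv_bounds
    (δ : ℝ) (hδ : 0 < δ) (χ : ℝ → ℝ)
    (hχsmooth : ContDiff ℝ (⊤ : ℕ∞) χ)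
    (hχodd : ∀ s : ℝ, χ (-s) = -χ s)
    (hχbdd : ∀ s : ℝ, |χ s| ≤ 1)
    (hχneg : ∀ s : ℝ, s ≤ -1 → χ s = -1)
    (hχpos : ∀ s : ℝ, 1 ≤ s → χ s = 1)
    (hχderiv : ∀ s : ℝ, 0 ≤ deriv χ s ∧ deriv χ s ≤ 1 + δ)
    (hχle : ∀ s : ℝ, -1 ≤ s → s ≤ 0 → χ s ≤ s)
    (hχge : ∀ s : ℝ, 0 ≤ s → s ≤ 1 → s ≤ χ s)
    (n : ℕ) (z : Fin (n + 1) → ℝ)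
    (hmax : ∃! j : Fin (n + 1), ∀ i, z i ≤ z j)
    (hmin : ∃! j : Fin (n + 1), ∀ i, z j ≤ z i) :
    ∃ D : ℝ,
      HasDerivAt (fun t : ℝ => mtilde χ (n + 1) (fun j => z j + t)) D 0 ∧
      1 ≤ D ∧ D ≤ 2 + δ := by

  classical
  set M := Finset.univ.sup' Finset.univ_nonempty z with hM
  set L := Finset.univ.inf' Finset.univ_nonempty z with hL
  set d := M - L with hdDef
  have hLM : L ≤ M :=
    (Finset.inf'_le _ (Finset.mem_univ (0 : Fin (n + 1)))).trans
      (Finset.le_sup' _ (Finset.mem_univ (0 : Fin (n + 1))))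
  have hd : 0 ≤ d := by simp [hdDef]; linarith
  have hd1 : (0 : ℝ) < 1 + d := by linarith
  set u := (M + L) / (1 + d) with hu
  have hsup : ∀ t : ℝ,
      Finset.univ.sup' Finset.univ_nonempty (fun j => z j + t) = M + t := by
    intro t
    apply le_antisymm
    · exact Finset.sup'_le _ _ fun i _ =>
        add_le_add (Finset.le_sup' z (Finset.mem_univ i)) le_rfl
    · obtain ⟨i, -, hi⟩ := Finset.exists_mem_eq_sup' Finset.univ_nonempty z
      calc M + t = z i + t := by rw [hM, hi]
        _ ≤ _ := Finset.le_sup' (fun j => z j + t) (Finset.mem_univ i)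
  have hinf : ∀ t : ℝ,
      Finset.univ.inf' Finset.univ_nonempty (fun j => z j + t) = L + t := by
    intro t
    apply le_antisymm
    · obtain ⟨i, -, hi⟩ := Finset.exists_mem_eq_inf' Finset.univ_nonempty z
      calc Finset.univ.inf' Finset.univ_nonempty (fun j => z j + t) ≤ z i + t :=
            Finset.inf'_le _ (Finset.mem_univ i)
        _ = L + t := by rw [hL, hi]
    · exact Finset.le_inf' _ _ fun i _ =>
        add_le_add (Finset.inf'_le z (Finset.mem_univ i)) le_rfl
  have hfun : (fun t : ℝ => mtilde χ (n + 1) (fun j => z j + t))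
      = fun t : ℝ => (M + L + 2 * t) / 2 + d / 2 * χ ((M + L + 2 * t) / (1 + d)) := by
    funext t
    simp only [mtilde, hsup t, hinf t]
    have h1 : (M + t) + (L + t) = M + L + 2 * t := by ring
    have h2 : (M + t) - (L + t) = d := by rw [hdDef]; ring
    rw [h1, h2]
  have hinner : HasDerivAt (fun t : ℝ => (M + L + 2 * t)) 2 0 := by
    simpa using ((hasDerivAt_id (0 : ℝ)).const_mul 2).const_add (M + L)
  have ha : HasDerivAt (fun t : ℝ => (M + L + 2 * t) / (1 + d)) (2 / (1 + d)) 0 :=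
    hinner.div_const (1 + d)
  have hχd : HasDerivAt χ (deriv χ u) ((fun t : ℝ => (M + L + 2 * t) / (1 + d)) 0) := by
    have h0 : (fun t : ℝ => (M + L + 2 * t) / (1 + d)) 0 = u := by
      simp [hu]
    rw [h0]
    exact ((hχsmooth.differentiable (by simp)) u).hasDerivAt
  have hcomp : HasDerivAt (fun t : ℝ => χ ((M + L + 2 * t) / (1 + d)))
      (deriv χ u * (2 / (1 + d))) 0 := hχd.comp 0 ha
  have h1 : HasDerivAt (fun t : ℝ => (M + L + 2 * t) / 2) 1 0 := by
    simpa using hinner.div_const 2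
  have hfull : HasDerivAt
      (fun t : ℝ => (M + L + 2 * t) / 2 + d / 2 * χ ((M + L + 2 * t) / (1 + d)))
      (1 + d / 2 * (deriv χ u * (2 / (1 + d)))) 0 :=
    h1.add (hcomp.const_mul (d / 2))
  refine ⟨1 + d / 2 * (deriv χ u * (2 / (1 + d))), by rw [hfun]; exact hfull, ?_, ?_⟩
  · have : 0 ≤ d / 2 * (deriv χ u * (2 / (1 + d))) := by
      have := (hχderiv u).1
      positivity
    linarith
  · have hX : d / 2 * (deriv χ u * (2 / (1 + d))) = d * deriv χ u / (1 + d) := by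
      field_simp
    have hXle : d * deriv χ u / (1 + d) ≤ 1 + δ := by
      rw [div_le_iff₀ hd1]
      nlinarith [(hχderiv u).1, (hχderiv u).2, hd, hδ]
    rw [hX]; linarith
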